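/- arXiv:2512.16697 — 7 statements merged into one kernel-verified Lean document; each statement's English description precedes it below -/
import Mathlib

section
/- Let π : Ũ ⟶ U be a universal map (an exponentiable map with a chosen right adjoint to postcomposition, i.e., chosen pullbacks) and p' : E' ⟶ B' any map in a finitely complete category. Given a tower of two pullback squares exhibiting X₂ ⟶ X₁ as a pullback of p' and X₁ ⟶ X₀ as a pullback of π, the composite X₂ ⟶ X₀ arises as a pullback of the generic composite GenComp(p', π) : ev^*(Ũ ×_U E') ⟶ π^*π_*(Ũ ×_U B') ⟶ π_*(Ũ ×_U B') along a canonical map X₀ ⟶ π_*(Ũ ×_U B'). -/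
open CategoryTheory CategoryTheory.Limits

noncomputable section

variable {C : Type*} [Category C] [HasFiniteLimits C]

/-- The pushforward `π_*(Ũ × B')` of the product projection, as an object of `C/U`. -/
def genQ {Ut U : C} (π : Ut ⟶ U) [(Over.pullback π).IsLeftAdjoint] (B' : C) : Over U :=
  (Over.pullback π).rightAdjoint.obj (Over.mk (prod.fst : Ut ⨯ B' ⟶ Ut))

/-- The counit `ev : π^*π_*(Ũ × B') ⟶ Ũ × B'` of the pullback–pushforward adjunction. -/
def genCounit {Ut U : C} (π : Ut ⟶ U) [(Over.pullback π).IsLeftAdjoint] (B' : C) :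
    (Over.pullback π).obj (genQ π B') ⟶ Over.mk (prod.fst : Ut ⨯ B' ⟶ Ut) :=
  (Adjunction.ofIsLeftAdjoint (Over.pullback π)).counit.app _

/-- The composite `π^*π_*(Ũ × B') ⟶ Ũ × B' ⟶ B'` along which the generic composite
pulls back `p' : E' ⟶ B'`. -/
def evBase {Ut U : C} (π : Ut ⟶ U) [(Over.pullback π).IsLeftAdjoint] (B' : C) :
    pullback (genQ π B').hom π ⟶ B' :=
  (genCounit π B').left ≫ (prod.snd : Ut ⨯ B' ⟶ B')

/-!
The classifying map `X₀ ⟶ π_*(Ũ × B')` is the adjoint transpose of `(a, c₂) : X₁ ⟶ Ũ × B'`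
over `Ũ`. Pulled back along `π`, the transpose gives `m₁ : X₁ ⟶ π^*π_*(Ũ × B')` whose composite
with the counit is `(a, c₂)` again, hence `m₁ ≫ evBase = c₂`. Both squares are then pullbacks by
pasting: the first against the pullback square of `π`, the second against that of `p'`.
-/

theorem Over.exists_lift_comp_counit_eq {Ut U : C} {π : Ut ⟶ U} {R : Over Ut ⥤ Over U}
    (adj : Over.pullback π ⊣ R) (Y : Over Ut)
    {X₀ X₁ : C} {q : X₁ ⟶ X₀} {c : X₀ ⟶ U} {a : X₁ ⟶ Ut} (h : IsPullback a q π c)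
    (s : X₁ ⟶ Y.left) (hs : s ≫ Y.hom = a) :
    ∃ (m : Over.mk c ⟶ R.obj Y) (m₁ : X₁ ⟶ pullback (R.obj Y).hom π),
      m₁ ≫ pullback.fst _ _ = q ≫ m.left ∧ m₁ ≫ pullback.snd _ _ = a ∧
        m₁ ≫ (adj.counit.app Y).left = s := by
  let e := h.flip.isoPullback
  let φ : (Over.pullback π).obj (Over.mk c) ⟶ Y :=
    Over.homMk (e.inv ≫ s) (by simp [e, hs])
  let m := adj.homEquiv _ _ φ
  have hm : (Over.pullback π).map m ≫ adj.counit.app Y = φ :=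
    (adj.homEquiv_counit _ _ m).symm.trans (Equiv.symm_apply_apply _ _)
  refine ⟨m, e.hom ≫ ((Over.pullback π).map m).left, ?_, ?_, ?_⟩
  · simp only [Over.pullback_map_left, Category.assoc, pullback.lift_fst, Over.mk_hom,
      Over.mk_left]
    simp [e]
  · simp only [Over.pullback_map_left, Category.assoc, pullback.lift_snd, Over.mk_hom,
      Over.mk_left]
    simp [e]
  · rw [Category.assoc, ← Over.comp_left, hm]
    simp [φ]

/-- given a tower of two pullback squares exhibiting `X₂ ⟶ X₁` as a
pullback of `p' : E' ⟶ B'` and `X₁ ⟶ X₀` as a pullback of the universal map `π`, the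
composite `X₂ ⟶ X₁ ⟶ X₀` arises as the pullback of the generic composite
`GenComp(p', π) : ev^*(Ũ × E') ⟶ π^*π_*(Ũ × B') ⟶ π_*(Ũ × B')` along a map
`X₀ ⟶ π_*(Ũ × B')`. -/
theorem generic_composite_classifies {Ut U E' B' : C} (π : Ut ⟶ U)
    [(Over.pullback π).IsLeftAdjoint] (p' : E' ⟶ B')
    {X₀ X₁ X₂ : C} (q₁ : X₁ ⟶ X₀) (q₂ : X₂ ⟶ X₁)
    (c₁ : X₀ ⟶ U) (a : X₁ ⟶ Ut) (h₁ : IsPullback a q₁ π c₁)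
    (c₂ : X₁ ⟶ B') (b : X₂ ⟶ E') (h₂ : IsPullback b q₂ p' c₂) :
    ∃ (m : X₀ ⟶ (genQ π B').left)
      (m₁ : X₁ ⟶ pullback (genQ π B').hom π)
      (m₂ : X₂ ⟶ pullback p' (evBase π B')),
      IsPullback m₁ q₁ (pullback.fst (genQ π B').hom π) m ∧
      IsPullback m₂ q₂ (pullback.snd p' (evBase π B')) m₁ := by
  obtain ⟨m, m₁, hm₁_fst, hm₁_snd, hm₁_counit⟩ : ∃ (m : Over.mk c₁ ⟶ genQ π B')
      (m₁ : X₁ ⟶ pullback (genQ π B').hom π), m₁ ≫ pullback.fst _ _ = q₁ ≫ m.left ∧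
        m₁ ≫ pullback.snd _ _ = a ∧ m₁ ≫ (genCounit π B').left = prod.lift a c₂ :=
    Over.exists_lift_comp_counit_eq (Adjunction.ofIsLeftAdjoint (Over.pullback π))
      (Over.mk (prod.fst : Ut ⨯ B' ⟶ Ut)) h₁ (prod.lift a c₂) (prod.lift_fst _ _)
  have hm₁_evBase : m₁ ≫ evBase π B' = c₂ := by
    rw [evBase, ← Category.assoc, hm₁_counit, prod.lift_snd]
  refine ⟨m.left, m₁, pullback.lift b (q₂ ≫ m₁) (by rw [Category.assoc, hm₁_evBase]; exact h₂.w),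
    ?_, ?_⟩
  · exact IsPullback.of_right (by rw [hm₁_snd, Over.w m]; exact h₁) hm₁_fst
      (IsPullback.of_hasPullback _ _).flip
  · exact IsPullback.of_right (by rw [pullback.lift_fst, hm₁_evBase]; exact h₂)
      (pullback.lift_snd _ _ _) (IsPullback.of_hasPullback _ _)

end
end

section
/- Let π : Ũ ⟶ U be a universal map in a finitely complete category with Id-type and Π-type structures. Suppose X ↠ E ↠ B is a composable pair of π-fibrations. Then there exists a transport map over Id_B(E): a morphism transport : ev₀^*X ⟶ ev₁^*X over Id_B(E) such that the pullback of transport along refl : E ⟶ Id_B(E) is the identity on X, where ev₀, ev₁ : Id_B(E) ⟶ E are the two endpoint evaluations and refl is the unit of the Id-type factorization E ⟶ Id_B(E) ⟶ E ×_B E of the diagonal. -/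
open CategoryTheory CategoryTheory.Limits

/-- A map is a `π`-fibration if it arises as a pullback of the universal map `π`. -/
def IsPiFib {C : Type*} [Category C] {Ut U : C} (π : Ut ⟶ U) {E B : C} (p : E ⟶ B) : Prop :=
  ∃ (c : B ⟶ U) (t : E ⟶ Ut), IsPullback t p π c

/-!
Pull `X ↠ E` back along both endpoints `ev₀, ev₁ : Id_B(E) ⟶ E`. Since `refl` is a section
of both, `X` itself is the pullback of `ev₀^*X ↠ Id_B(E)` along `refl`, and the inclusion
`X ⟶ ev₀^*X` is a pullback of `refl`. J-elimination then extends the inclusion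
`X ⟶ ev₁^*X` along it, against the fibration `ev₁^*X ↠ Id_B(E)`; the extension is the
transport map, and the upper triangle of the lifting problem says it restricts to the
identity along `refl`.
-/

namespace IsPiFib

variable {C : Type*} [Category C] {Ut U : C} {π : Ut ⟶ U}

theorem of_isPullback {X E Y P : C} {p : X ⟶ E} {g : Y ⟶ E} {fst : P ⟶ X} {snd : P ⟶ Y}
    (h : IsPullback fst snd p g) (hp : IsPiFib π p) : IsPiFib π snd := by
  obtain ⟨c, t, hc⟩ := hp
  exact ⟨g ≫ c, fst ≫ t, h.paste_horiz hc⟩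

theorem pullback_snd {X E Y : C} {p : X ⟶ E} (hp : IsPiFib π p) (g : Y ⟶ E) [HasPullback p g] :
    IsPiFib π (pullback.snd p g) :=
  of_isPullback (IsPullback.of_hasPullback p g) hp

end IsPiFib

/-- Pulling `p` back along a retraction `g` of `s` and then along `s` gives `p` back. -/
theorem isPullback_lift_of_retraction {C : Type*} [Category C] {X E I : C} (p : X ⟶ E)
    {s : E ⟶ I} {g : I ⟶ E} (hsg : s ≫ g = 𝟙 E) [HasPullback p g] :
    IsPullback p (pullback.lift (𝟙 X) (p ≫ s) (by simp [hsg])) s (pullback.snd p g) := by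
  have hpaste : IsPullback p (pullback.lift (𝟙 X) (p ≫ s) (by simp [hsg]) ≫ pullback.fst p g)
      (s ≫ g) p := by
    rw [pullback.lift_fst, hsg]
    exact IsPullback.of_vert_isIso ⟨by simp⟩
  exact IsPullback.of_bot hpaste (pullback.lift_snd _ _ _).symm (IsPullback.of_hasPullback p g).flip

/-- Let `π : Ũ ⟶ U` be a universal map with Id-type and Π-type structures,
and let `X ↠ E ↠ B` be a composable pair of `π`-fibrations.  Given the Id-type
factorization `refl : E ⟶ Id_B(E)`, `ev_∂ : Id_B(E) ↠ E ×_B E` of the diagonal (with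
`ev_∂` a `π`-fibration, and with the J-elimination/Π-type consequence that pullbacks of
`refl` along arbitrary maps lift against `π`-fibrations), there is a transport map
`transport : ev₀^*X ⟶ ev₁^*X` over `Id_B(E)` whose pullback along `refl` is the
identity of `X` (expressed via the canonical maps `X ⟶ ev₀^*X`, `X ⟶ ev₁^*X`). -/
theorem transport_exists {C : Type*} [Category C] [HasFiniteLimits C]
    {Ut U : C} (π : Ut ⟶ U)
    {B E X : C} (q : E ⟶ B) (p : X ⟶ E)
    (hp : IsPiFib π p)
    (idE : C) (refl : E ⟶ idE) (evb : idE ⟶ pullback q q)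
    (hfact : refl ≫ evb = pullback.lift (𝟙 E) (𝟙 E) rfl)
    (hJ : ∀ {Z W : C} (j : Z ⟶ W) (a : Z ⟶ E) (b : W ⟶ idE), IsPullback a j refl b →
      ∀ {P Q : C} (w : P ⟶ Q), IsPiFib π w →
        ∀ (top : Z ⟶ P) (bot : W ⟶ Q), top ≫ w = j ≫ bot →
          ∃ l : W ⟶ P, j ≫ l = top ∧ l ≫ w = bot) :
    ∃ t : pullback p (evb ≫ pullback.fst q q) ⟶ pullback p (evb ≫ pullback.snd q q),
      t ≫ pullback.snd p (evb ≫ pullback.snd q q) = pullback.snd p (evb ≫ pullback.fst q q) ∧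
      pullback.lift (𝟙 X) (p ≫ refl) (by simp [reassoc_of% hfact, pullback.lift_fst, pullback.lift_snd]) ≫ t =
        pullback.lift (𝟙 X) (p ≫ refl) (by simp [reassoc_of% hfact, pullback.lift_fst, pullback.lift_snd]) := by
  have refl_ev₀ : refl ≫ evb ≫ pullback.fst q q = 𝟙 E := by
    simp [reassoc_of% hfact, pullback.lift_fst]
  have refl_ev₁ : refl ≫ evb ≫ pullback.snd q q = 𝟙 E := by
    simp [reassoc_of% hfact, pullback.lift_snd]
  obtain ⟨t, ht_refl, ht_over⟩ :=
    hJ _ p _ (isPullback_lift_of_retraction p refl_ev₀) _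
      (hp.pullback_snd (evb ≫ pullback.snd q q))
      (pullback.lift (𝟙 X) (p ≫ refl) (by simp [refl_ev₁])) _
      (by rw [pullback.lift_snd, pullback.lift_snd])
  exact ⟨t, ht_over, ht_refl⟩
end

section
/- Retract argument for left lifting: let π : Ũ ⟶ U be a universal map with an Id-type structure such that refl-maps have the left lifting property against π-fibrations, and with a Π-type structure. Suppose over an object B we have maps i : U ⟶ E, j : U ⟶ E', s : E ⟶ E', r : E' ⟶ E in C/B with s ∘ i = j, r ∘ j = i, and with E π-fibrant over B, such that r ∘ s is Id-homotopic to the identity of E via a homotopy H : E ⟶ Id_B(E) that restricts to refl along i (i.e., H ∘ i = refl ∘ i). If j has the (uniform) left lifting property against π (allowing sections of π-fibrations over E' extending given sections over U), then so does i: every π-fibration X ↠ E with a section over U along i admits a section over E restricting to the given one. -/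
open CategoryTheory CategoryTheory.Limits

/-- retract argument for left lifting: over an object `B`, given maps
`i : U' ⟶ E`, `j : U' ⟶ E'`, `s : E ⟶ E'`, `r : E' ⟶ E` over `B` with `s ∘ i = j`,
`r ∘ j = i`, `E` `π`-fibrant over `B`, and `r ∘ s` Id-homotopic to the identity of `E`
via a homotopy `H` restricting to `refl` along `i`, where the Id-type structure on `E`
over `B` consists of `refl : E ⟶ Id_B(E)` and the `π`-fibration
`ev_∂ : Id_B(E) ↠ E ×_B E` factoring the diagonal, and where pullbacks of `refl` lift
against `π`-fibrations (J-elimination plus Π-type structure): if `j` has the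
section-extension left lifting property against `π`-fibrations, then so does `i`. -/
theorem retract_left_lifting {C : Type*} [Category C] [HasFiniteLimits C]
    {Ut U : C} (π : Ut ⟶ U)
    {B U' E E' : C} (bU : U' ⟶ B) (bE : E ⟶ B) (bE' : E' ⟶ B)
    (i : U' ⟶ E) (j : U' ⟶ E') (s : E ⟶ E') (r : E' ⟶ E)
    (hiB : i ≫ bE = bU) (hjB : j ≫ bE' = bU) (hsB : s ≫ bE' = bE) (hrB : r ≫ bE = bE')
    (hsi : i ≫ s = j) (hrj : j ≫ r = i)
    (hEfib : IsPiFib π bE)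
    (idE : C) (refl : E ⟶ idE) (evb : idE ⟶ pullback bE bE)
    (hfact : refl ≫ evb = pullback.lift (𝟙 E) (𝟙 E) rfl)
    (hevb : IsPiFib π evb)
    (H : E ⟶ idE)
    (hH : H ≫ evb = pullback.lift (s ≫ r) (𝟙 E)
      (by rw [Category.assoc, hrB, hsB, Category.id_comp]))
    (hHi : i ≫ H = i ≫ refl)
    (hJ : ∀ {Z W : C} (k : Z ⟶ W) (a : Z ⟶ E) (b : W ⟶ idE), IsPullback a k refl b →
      ∀ {P Q : C} (w : P ⟶ Q), IsPiFib π w →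
        ∀ (top : Z ⟶ P) (bot : W ⟶ Q), top ≫ w = k ≫ bot →
          ∃ l : W ⟶ P, k ≫ l = top ∧ l ≫ w = bot)
    (hjLLP : ∀ {X : C} (w : X ⟶ E'), IsPiFib π w →
      ∀ x : U' ⟶ X, x ≫ w = j → ∃ x' : E' ⟶ X, x' ≫ w = 𝟙 E' ∧ j ≫ x' = x) :
    ∀ {X : C} (w : X ⟶ E), IsPiFib π w →
      ∀ x : U' ⟶ X, x ≫ w = i → ∃ x' : E ⟶ X, x' ≫ w = 𝟙 E ∧ i ≫ x' = x := by
  intro X w hw x hxw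
  -- Step 1: pull back X along r to get a fibration over E', lift using hjLLP.
  obtain ⟨c, t, hpb⟩ := hw
  have h1 : IsPullback (pullback.snd r w) (pullback.fst r w) w r :=
    (IsPullback.of_hasPullback r w).flip
  have hwfib : IsPiFib π (pullback.fst r w) :=
    ⟨r ≫ c, pullback.snd r w ≫ t, h1.paste_horiz hpb⟩
  have hx1 : j ≫ r = x ≫ w := by rw [hrj, hxw]
  obtain ⟨σ, hσ1, hσ2⟩ := hjLLP (pullback.fst r w) hwfib (pullback.lift j x hx1)
    (pullback.lift_fst _ _ _)
  obtain ⟨f, hfw, hif⟩ : ∃ f : E ⟶ X, f ≫ w = s ≫ r ∧ i ≫ f = x := by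
    refine ⟨s ≫ σ ≫ pullback.snd r w, ?_, ?_⟩
    · rw [Category.assoc, Category.assoc, ← pullback.condition,
        ← Category.assoc σ, hσ1, Category.id_comp]
    · rw [← Category.assoc, hsi, ← Category.assoc, hσ2, pullback.lift_snd]
  -- Step 2: transport f along the homotopy H using J-lifting.
  have hfact' : ∀ {Z : C} (k : pullback bE bE ⟶ Z),
      refl ≫ evb ≫ k = pullback.lift (𝟙 E) (𝟙 E) rfl ≫ k := by
    intro Z k
    rw [← Category.assoc, hfact]
  have hrc : (w ≫ refl) ≫ evb ≫ pullback.fst bE bE = 𝟙 X ≫ w := by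
    rw [Category.assoc, hfact', pullback.lift_fst, Category.comp_id, Category.id_comp]
  obtain ⟨refl', hr1, hr2⟩ :
      ∃ refl' : X ⟶ pullback (evb ≫ pullback.fst bE bE) w,
        refl' ≫ pullback.fst (evb ≫ pullback.fst bE bE) w = w ≫ refl ∧
        refl' ≫ pullback.snd (evb ≫ pullback.fst bE bE) w = 𝟙 X :=
    ⟨pullback.lift (w ≫ refl) (𝟙 X) hrc, pullback.lift_fst _ _ _, pullback.lift_snd _ _ _⟩
  have hBB : pullback.snd (evb ≫ pullback.fst bE bE) w ≫ w =
      pullback.fst (evb ≫ pullback.fst bE bE) w ≫ evb ≫ pullback.fst bE bE :=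
    pullback.condition.symm
  have hBB' : ∀ {Z : C} (k : E ⟶ Z),
      pullback.snd (evb ≫ pullback.fst bE bE) w ≫ w ≫ k =
      pullback.fst (evb ≫ pullback.fst bE bE) w ≫ evb ≫ pullback.fst bE bE ≫ k := by
    intro Z k
    rw [← Category.assoc, hBB, Category.assoc, Category.assoc]
  have key : IsPullback w refl' refl (pullback.fst (evb ≫ pullback.fst bE bE) w) := by
    apply IsPullback.of_isLimit
      (PullbackCone.IsLimit.mk hr1.symm
        (fun sc => sc.snd ≫ pullback.snd (evb ≫ pullback.fst bE bE) w) ?_ ?_ ?_)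
    · intro sc
      simp only [Category.assoc]
      rw [hBB, ← Category.assoc, ← sc.condition, Category.assoc, hfact',
        pullback.lift_fst, Category.comp_id]
    · intro sc
      apply pullback.hom_ext
      · simp only [Category.assoc]
        rw [hr1, hBB', ← Category.assoc, ← sc.condition, Category.assoc, hfact',
          pullback.lift_fst_assoc, Category.id_comp, sc.condition]
      · simp only [Category.assoc]
        rw [hr2, Category.comp_id]
    · intro sc m hm1 hm2
      rw [← hm2, Category.assoc, hr2, Category.comp_id]
  have hbotcomm : 𝟙 X ≫ w =
      refl' ≫ pullback.fst (evb ≫ pullback.fst bE bE) w ≫ evb ≫ pullback.snd bE bE := by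
    rw [Category.id_comp, ← Category.assoc, hr1, Category.assoc, hfact',
      pullback.lift_snd, Category.comp_id]
  obtain ⟨τ, hτ1, hτ2⟩ := hJ refl' w (pullback.fst (evb ≫ pullback.fst bE bE) w) key w
    ⟨c, t, hpb⟩ (𝟙 X) (pullback.fst (evb ≫ pullback.fst bE bE) w ≫ evb ≫ pullback.snd bE bE)
    hbotcomm
  have hHf : H ≫ evb ≫ pullback.fst bE bE = f ≫ w := by
    rw [← Category.assoc, hH, pullback.lift_fst, hfw]
  obtain ⟨h, hh1, hh2⟩ :
      ∃ h : E ⟶ pullback (evb ≫ pullback.fst bE bE) w,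
        h ≫ pullback.fst (evb ≫ pullback.fst bE bE) w = H ∧
        h ≫ pullback.snd (evb ≫ pullback.fst bE bE) w = f :=
    ⟨pullback.lift H f hHf, pullback.lift_fst _ _ _, pullback.lift_snd _ _ _⟩
  refine ⟨h ≫ τ, ?_, ?_⟩
  · rw [Category.assoc, hτ2, ← Category.assoc, hh1, ← Category.assoc, hH,
      pullback.lift_snd]
  · have hih : i ≫ h = x ≫ refl' := by
      apply pullback.hom_ext
      · rw [Category.assoc, Category.assoc, hh1, hr1, hHi, ← Category.assoc, hxw]
      · rw [Category.assoc, Category.assoc, hh2, hr2, Category.comp_id, hif]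
    rw [← Category.assoc, hih, Category.assoc, hτ1, Category.comp_id]
end

section
/- Dual strong deformation retract characterization of trivial cofibrations: let π : Ũ ⟶ U be a universal map with a full Id-type structure and a Π-type structure, E a π-fibrant object over B, and f : E ⟶ Y a map over B with a (strict) section g : Y ⟶ E (f ∘ g = id_Y). Then g exhibits f as the dual of a strong Id-deformation retract (i.e., there exists an Id-homotopy H : E ⟶ Id_B(E) with ev_∂ ∘ H = (g∘f, id) and H ∘ g = refl ∘ g) if and only if g has the (uniform) left lifting property against π in the slice over B. -/
open CategoryTheory CategoryTheory.Limits

/-- dual strong deformation retract characterization: let `π` be a universal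
map with a full Id-type structure (factorization `refl : E ⟶ Id_B(E)`,
`ev_∂ : Id_B(E) ↠ E ×_B E` of the diagonal, `ev_∂` a `π`-fibration, and pullbacks of
`refl` lifting against `π`-fibrations) and a Π-type structure, `E` `π`-fibrant over `B`,
`f : E ⟶ Y` over `B` with strict section `g : Y ⟶ E` (`f ∘ g = id`).  Then `g` exhibits
`f` as the dual of a strong Id-deformation retract — i.e. there exists `H : E ⟶ Id_B(E)`
with `ev_∂ ∘ H = (g∘f, id)` and `H ∘ g = refl ∘ g` — if and only if `g` has the left
lifting property against `π`-fibrations (fillers making both triangles commute). -/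
theorem dual_sdr_iff_llp {C : Type*} [Category C] [HasFiniteLimits C]
    {Ut U : C} (π : Ut ⟶ U)
    {B E Y : C} (bE : E ⟶ B) (bY : Y ⟶ B)
    (f : E ⟶ Y) (g : Y ⟶ E)
    (hfB : f ≫ bY = bE) (hgB : g ≫ bE = bY) (hsec : g ≫ f = 𝟙 Y)
    (hEfib : IsPiFib π bE)
    (idE : C) (refl : E ⟶ idE) (evb : idE ⟶ pullback bE bE)
    (hfact : refl ≫ evb = pullback.lift (𝟙 E) (𝟙 E) rfl)
    (hevb : IsPiFib π evb)
    (hJ : ∀ {Z W : C} (k : Z ⟶ W) (a : Z ⟶ E) (b : W ⟶ idE), IsPullback a k refl b →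
      ∀ {P Q : C} (w : P ⟶ Q), IsPiFib π w →
        ∀ (top : Z ⟶ P) (bot : W ⟶ Q), top ≫ w = k ≫ bot →
          ∃ l : W ⟶ P, k ≫ l = top ∧ l ≫ w = bot) :
    (∃ H : E ⟶ idE,
        H ≫ evb = pullback.lift (f ≫ g) (𝟙 E)
          (by rw [Category.assoc, hgB, hfB, Category.id_comp]) ∧
        g ≫ H = g ≫ refl) ↔
      (∀ {P Q : C} (w : P ⟶ Q), IsPiFib π w →
        ∀ (top : Y ⟶ P) (bot : E ⟶ Q), top ≫ w = g ≫ bot →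
          ∃ l : E ⟶ P, g ≫ l = top ∧ l ≫ w = bot) := by
  have hre0 : refl ≫ evb ≫ pullback.fst bE bE = 𝟙 E := by
    rw [← Category.assoc, hfact, pullback.lift_fst]
  have hre1 : refl ≫ evb ≫ pullback.snd bE bE = 𝟙 E := by
    rw [← Category.assoc, hfact, pullback.lift_snd]
  constructor
  · rintro ⟨H, hH1, hH2⟩ P Q w hw top bot hsq
    let ev0 : idE ⟶ E := evb ≫ pullback.fst bE bE
    let ev1 : idE ⟶ E := evb ≫ pullback.snd bE bE
    have hre0' : refl ≫ ev0 = 𝟙 E := hre0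
    have hre1' : refl ≫ ev1 = 𝟙 E := hre1
    have hH0 : H ≫ ev0 = f ≫ g := by
      show H ≫ evb ≫ pullback.fst bE bE = f ≫ g
      rw [← Category.assoc, hH1, pullback.lift_fst]
    have hHe1 : H ≫ ev1 = 𝟙 E := by
      show H ≫ evb ≫ pullback.snd bE bE = 𝟙 E
      rw [← Category.assoc, hH1, pullback.lift_snd]
    have hk : (𝟙 Y) ≫ g = (g ≫ refl) ≫ ev0 := by
      rw [Category.id_comp, Category.assoc, hre0', Category.comp_id]
    let k : Y ⟶ pullback g ev0 := pullback.lift (𝟙 Y) (g ≫ refl) hk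
    have hkfst : k ≫ pullback.fst g ev0 = 𝟙 Y := pullback.lift_fst _ _ _
    have hksnd : k ≫ pullback.snd g ev0 = g ≫ refl := pullback.lift_snd _ _ _
    have hw0 : pullback.fst g ev0 ≫ g = pullback.snd g ev0 ≫ ev0 := pullback.condition
    -- k is a pullback of refl along the second projection
    have hpb : IsPullback g k refl (pullback.snd g ev0) := by
      refine IsPullback.of_isLimit' ⟨hksnd.symm⟩ ?_
      have key : ∀ s : PullbackCone refl (pullback.snd g ev0),
          (s.snd ≫ pullback.fst g ev0) ≫ g = s.fst := by
        intro s
        calc (s.snd ≫ pullback.fst g ev0) ≫ g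
            = s.snd ≫ pullback.fst g ev0 ≫ g := by simp only [Category.assoc]
          _ = s.snd ≫ pullback.snd g ev0 ≫ ev0 := by rw [hw0]
          _ = (s.snd ≫ pullback.snd g ev0) ≫ ev0 := by simp only [Category.assoc]
          _ = (s.fst ≫ refl) ≫ ev0 := by rw [s.condition]
          _ = s.fst ≫ refl ≫ ev0 := by simp only [Category.assoc]
          _ = s.fst := by rw [hre0', Category.comp_id]
      refine PullbackCone.IsLimit.mk _ (fun s => s.snd ≫ pullback.fst g ev0) ?_ ?_ ?_
      · intro s
        exact key s
      · intro s
        show (s.snd ≫ pullback.fst g ev0) ≫ k = s.snd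
        apply pullback.hom_ext
        · calc ((s.snd ≫ pullback.fst g ev0) ≫ k) ≫ pullback.fst g ev0
              = (s.snd ≫ pullback.fst g ev0) ≫ k ≫ pullback.fst g ev0 := by
                simp only [Category.assoc]
            _ = s.snd ≫ pullback.fst g ev0 := by rw [hkfst, Category.comp_id]
        · calc ((s.snd ≫ pullback.fst g ev0) ≫ k) ≫ pullback.snd g ev0
              = (s.snd ≫ pullback.fst g ev0) ≫ k ≫ pullback.snd g ev0 := by
                simp only [Category.assoc]
            _ = (s.snd ≫ pullback.fst g ev0) ≫ g ≫ refl := by rw [hksnd]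
            _ = ((s.snd ≫ pullback.fst g ev0) ≫ g) ≫ refl := by simp only [Category.assoc]
            _ = s.fst ≫ refl := by rw [key s]
            _ = s.snd ≫ pullback.snd g ev0 := s.condition
      · intro s m hm1 hm2
        show m = s.snd ≫ pullback.fst g ev0
        calc m = m ≫ 𝟙 Y := by rw [Category.comp_id]
          _ = m ≫ k ≫ pullback.fst g ev0 := by rw [hkfst]
          _ = (m ≫ k) ≫ pullback.fst g ev0 := by simp only [Category.assoc]
          _ = s.snd ≫ pullback.fst g ev0 := by rw [hm2]
    -- set up the lifting problem for k against w
    have hsq' : top ≫ w = k ≫ (pullback.snd g ev0 ≫ ev1 ≫ bot) := by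
      calc top ≫ w = g ≫ bot := hsq
        _ = g ≫ (refl ≫ ev1) ≫ bot := by rw [hre1', Category.id_comp]
        _ = (g ≫ refl) ≫ ev1 ≫ bot := by simp only [Category.assoc]
        _ = (k ≫ pullback.snd g ev0) ≫ ev1 ≫ bot := by rw [hksnd]
        _ = k ≫ (pullback.snd g ev0 ≫ ev1 ≫ bot) := by simp only [Category.assoc]
    obtain ⟨L, hL1, hL2⟩ := hJ k g (pullback.snd g ev0) hpb w hw top
      (pullback.snd g ev0 ≫ ev1 ≫ bot) hsq'
    -- transport the solution along the homotopy
    refine ⟨pullback.lift f H hH0.symm ≫ L, ?_, ?_⟩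
    · have hgm : g ≫ pullback.lift f H hH0.symm = k := by
        apply pullback.hom_ext
        · rw [Category.assoc, pullback.lift_fst, hkfst, hsec]
        · rw [Category.assoc, pullback.lift_snd, hksnd, hH2]
      rw [← Category.assoc, hgm, hL1]
    · calc (pullback.lift f H hH0.symm ≫ L) ≫ w
          = pullback.lift f H hH0.symm ≫ L ≫ w := by simp only [Category.assoc]
        _ = pullback.lift f H hH0.symm ≫ pullback.snd g ev0 ≫ ev1 ≫ bot := by rw [hL2]
        _ = (pullback.lift f H hH0.symm ≫ pullback.snd g ev0) ≫ ev1 ≫ bot := by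
            simp only [Category.assoc]
        _ = H ≫ ev1 ≫ bot := by rw [pullback.lift_snd]
        _ = (H ≫ ev1) ≫ bot := by simp only [Category.assoc]
        _ = bot := by rw [hHe1, Category.id_comp]
  · intro hllp
    have hwpf : (f ≫ g) ≫ bE = (𝟙 E) ≫ bE := by
      rw [Category.assoc, hgB, hfB, Category.id_comp]
    have hsq : (g ≫ refl) ≫ evb = g ≫ pullback.lift (f ≫ g) (𝟙 E) hwpf := by
      apply pullback.hom_ext
      · calc ((g ≫ refl) ≫ evb) ≫ pullback.fst bE bE
            = g ≫ refl ≫ evb ≫ pullback.fst bE bE := by simp only [Category.assoc]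
          _ = g := by rw [hre0, Category.comp_id]
          _ = (g ≫ f) ≫ g := by rw [hsec, Category.id_comp]
          _ = g ≫ f ≫ g := by simp only [Category.assoc]
          _ = g ≫ pullback.lift (f ≫ g) (𝟙 E) hwpf ≫ pullback.fst bE bE := by
              rw [pullback.lift_fst]
          _ = (g ≫ pullback.lift (f ≫ g) (𝟙 E) hwpf) ≫ pullback.fst bE bE := by
              simp only [Category.assoc]
      · calc ((g ≫ refl) ≫ evb) ≫ pullback.snd bE bE
            = g ≫ refl ≫ evb ≫ pullback.snd bE bE := by simp only [Category.assoc]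
          _ = g := by rw [hre1, Category.comp_id]
          _ = g ≫ pullback.lift (f ≫ g) (𝟙 E) hwpf ≫ pullback.snd bE bE := by
              rw [pullback.lift_snd, Category.comp_id]
          _ = (g ≫ pullback.lift (f ≫ g) (𝟙 E) hwpf) ≫ pullback.snd bE bE := by
              simp only [Category.assoc]
    obtain ⟨H, hH1, hH2⟩ := hllp evb hevb (g ≫ refl)
      (pullback.lift (f ≫ g) (𝟙 E) hwpf) hsq
    exact ⟨H, hH2, hH1⟩
end

section
/- Lower-half lifting characterization of homotopy retractions: with π : Ũ ⟶ U a universal map carrying a pre-Id-type structure equipped with a transport structure, E a π-fibrant object over B, f : E ⟶ Y over B, and g : Y ⟶ E a section of f, the map g is an Id-homotopy retraction of f (i.e., g∘f is Id-homotopic to id_E over B) if and only if g admits a family of lower-half lifts against π (for every pullback of π and commuting square with g on the left, there exists a diagonal making only the lower triangle commute, uniformly). -/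
open CategoryTheory CategoryTheory.Limits

namespace IsPiFib

variable {C : Type*} [Category C] [HasPullbacks C] {Ut U : C} {π : Ut ⟶ U}

lemma pullback_snd_s9 {P Q E : C} {w : P ⟶ Q} (hw : IsPiFib π w) (bot : E ⟶ Q) :
    IsPiFib π (pullback.snd w bot) := by
  obtain ⟨c, t, hpb⟩ := hw
  exact ⟨bot ≫ c, pullback.fst w bot ≫ t, (IsPullback.of_hasPullback w bot).paste_horiz hpb⟩

end IsPiFib

lemma exists_lift_of_transport {C : Type*} [Category C] [HasPullbacks C] {B E idE X A : C}
    {bE : E ⟶ B} {evb : idE ⟶ pullback bE bE} (w : X ⟶ E)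
    (t : pullback w (evb ≫ pullback.fst bE bE) ⟶ pullback w (evb ≫ pullback.snd bE bE))
    (ht : t ≫ pullback.snd w (evb ≫ pullback.snd bE bE) =
      pullback.snd w (evb ≫ pullback.fst bE bE))
    {a b : A ⟶ E} (hab : a ≫ bE = b ≫ bE) (H : A ⟶ idE) (hH : H ≫ evb = pullback.lift a b hab)
    (x : A ⟶ X) (hx : x ≫ w = a) :
    ∃ y : A ⟶ X, y ≫ w = b := by
  have hxH : x ≫ w = H ≫ evb ≫ pullback.fst bE bE := by
    rw [reassoc_of% hH, pullback.lift_fst, hx]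
  refine ⟨pullback.lift x H hxH ≫ t ≫ pullback.fst _ _, ?_⟩
  rw [Category.assoc, Category.assoc, pullback.condition, reassoc_of% ht, pullback.lift_snd_assoc,
    reassoc_of% hH, pullback.lift_snd]

lemma exists_lift_of_section_pullback_snd {C : Type*} [Category C] [HasPullbacks C]
    {P Q E : C} {w : P ⟶ Q} {bot : E ⟶ Q} (s : E ⟶ pullback w bot)
    (hs : s ≫ pullback.snd w bot = 𝟙 E) :
    ∃ l : E ⟶ P, l ≫ w = bot :=
  ⟨s ≫ pullback.fst w bot, by rw [Category.assoc, pullback.condition, reassoc_of% hs]⟩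

/-- lower-half lifting characterization of homotopy retractions: with
`π : Ũ ⟶ U` a universal map carrying a pre-Id-type structure on the `π`-fibrant object
`E` over `B` (a factorization `refl : E ⟶ Id_B(E)`, `ev_∂ : Id_B(E) ↠ E ×_B E` of the
diagonal with `ev_∂` a `π`-fibration) equipped with a transport structure (for every
`π`-fibration `w : X ⟶ E` there is a transport map `ev₀^*X ⟶ ev₁^*X` over `Id_B(E)`
restricting to the identity along `refl`), and with `f : E ⟶ Y` over `B` and
`g : Y ⟶ E` a strict section of `f`: the map `g` is an Id-homotopy retraction of `f`
(i.e. `g∘f` is Id-homotopic to `id_E` over `B`) if and only if `g` admits lower-half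
lifts against `π`-fibrations (diagonals making only the lower triangle commute). -/
theorem homotopy_retraction_iff_lower_half_lifts {C : Type*} [Category C] [HasFiniteLimits C]
    {Ut U : C} (π : Ut ⟶ U)
    {B E Y : C} (bE : E ⟶ B) (bY : Y ⟶ B)
    (f : E ⟶ Y) (g : Y ⟶ E)
    (hfB : f ≫ bY = bE) (hgB : g ≫ bE = bY) (hsec : g ≫ f = 𝟙 Y)
    (idE : C) (refl : E ⟶ idE) (evb : idE ⟶ pullback bE bE)
    (hfact : refl ≫ evb = pullback.lift (𝟙 E) (𝟙 E) rfl)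
    (hevb : IsPiFib π evb)
    (hTr : ∀ {X : C} (w : X ⟶ E), IsPiFib π w →
      ∃ t : pullback w (evb ≫ pullback.fst bE bE) ⟶ pullback w (evb ≫ pullback.snd bE bE),
        t ≫ pullback.snd w (evb ≫ pullback.snd bE bE) =
          pullback.snd w (evb ≫ pullback.fst bE bE) ∧
        pullback.lift (𝟙 X) (w ≫ refl) (by simp [reassoc_of% hfact, pullback.lift_fst, pullback.lift_snd]) ≫ t =
          pullback.lift (𝟙 X) (w ≫ refl) (by simp [reassoc_of% hfact, pullback.lift_fst, pullback.lift_snd])) :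
    (∃ H : E ⟶ idE,
        H ≫ evb = pullback.lift (f ≫ g) (𝟙 E)
          (by rw [Category.assoc, hgB, hfB, Category.id_comp])) ↔
      (∀ {P Q : C} (w : P ⟶ Q), IsPiFib π w →
        ∀ (top : Y ⟶ P) (bot : E ⟶ Q), top ≫ w = g ≫ bot →
          ∃ l : E ⟶ P, l ≫ w = bot) := by
  constructor
  · rintro ⟨H, hH⟩ P Q w hw top bot hsq
    obtain ⟨t, ht, -⟩ := hTr (pullback.snd w bot) (hw.pullback_snd_s9 bot)
    obtain ⟨s, hs⟩ := exists_lift_of_transport _ t ht _ H hH (f ≫ pullback.lift top g hsq)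
      (by rw [Category.assoc, pullback.lift_snd])
    exact exists_lift_of_section_pullback_snd s hs
  · intro hlift
    have hfgB : (f ≫ g) ≫ bE = 𝟙 E ≫ bE := by rw [Category.assoc, hgB, hfB, Category.id_comp]
    have hsq : (g ≫ refl) ≫ evb = g ≫ pullback.lift (f ≫ g) (𝟙 E) hfgB := by
      rw [Category.assoc, hfact]
      apply pullback.hom_ext <;> simp [reassoc_of% hsec, pullback.lift_fst, pullback.lift_snd]
    exact hlift evb hevb (g ≫ refl) _ hsq
end

section
/- Uniqueness up to homotopy of two-sided fillers: let π : Ũ ⟶ U be a universal map with a full Id-type structure. Suppose E₀ ↠ B and E₁ ↠ B are π-fibrant, X ⟶ E₀ and X ⟶ E₁ are maps over B each having the left lifting property against π, and J : E₀ ⟶ E₁ is a map under X and over B. Then there exist maps s, r : E₁ ⟶ E₀ under X and over B together with Id-homotopies over B from J∘s to id_{E₁} constant along X ⟶ E₁, and from r∘J (using r = s) to id_{E₀} constant along X ⟶ E₀. -/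
open CategoryTheory CategoryTheory.Limits

def HasLLPAgainstPiFib {C : Type*} [Category C] {Ut U : C} (π : Ut ⟶ U) {X Z : C}
    (u : X ⟶ Z) : Prop :=
  ∀ {P Q : C} (w : P ⟶ Q), IsPiFib π w →
    ∀ (top : X ⟶ P) (bot : Z ⟶ Q), top ≫ w = u ≫ bot →
      ∃ l : Z ⟶ P, u ≫ l = top ∧ l ≫ w = bot

theorem exists_idHomotopy_rel {C : Type*} [Category C] {Ut U : C} {π : Ut ⟶ U}
    {X Z E B : C} {u : X ⟶ Z} (hu : HasLLPAgainstPiFib π u)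
    {p : E ⟶ B} [HasPullback p p] {idE : C} {refl : E ⟶ idE} {evb : idE ⟶ pullback p p}
    (hfact : refl ≫ evb = pullback.lift (𝟙 E) (𝟙 E) rfl) (hevb : IsPiFib π evb)
    (f g : Z ⟶ E) (hp : f ≫ p = g ≫ p) (hfg : u ≫ f = u ≫ g) :
    ∃ H : Z ⟶ idE, H ≫ evb = pullback.lift f g hp ∧ u ≫ H = u ≫ g ≫ refl := by
  obtain ⟨H, hHu, hHev⟩ := hu evb hevb (u ≫ g ≫ refl) (pullback.lift f g hp) <| by
    rw [Category.assoc, Category.assoc, hfact]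
    ext <;> simp only [Category.assoc, pullback.lift_fst, pullback.lift_snd, Category.comp_id, hfg]
  exact ⟨H, hHev, hHu⟩

/-- uniqueness up to homotopy of two-sided fillers: let `π` have a full
Id-type structure.  Suppose `E₀ ↠ B`, `E₁ ↠ B` are `π`-fibrant, `u₀ : X ⟶ E₀` and
`u₁ : X ⟶ E₁` are maps over `B` each having the left lifting property against
`π`-fibrations, and `J : E₀ ⟶ E₁` is a map under `X` and over `B`.  Then there are maps
`s, r : E₁ ⟶ E₀` under `X` and over `B` together with Id-homotopies over `B` from `J∘s`
to `id_{E₁}` constant along `u₁`, and from `r∘J` to `id_{E₀}` constant along `u₀`. -/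
theorem filler_unique_up_to_homotopy {C : Type*} [Category C] [HasFiniteLimits C]
    {Ut U : C} (π : Ut ⟶ U)
    {B X E₀ E₁ : C} (p₀ : E₀ ⟶ B) (p₁ : E₁ ⟶ B)
    (h₀ : IsPiFib π p₀)
    (u₀ : X ⟶ E₀) (u₁ : X ⟶ E₁) (hu : u₀ ≫ p₀ = u₁ ≫ p₁)
    (hu₀LLP : ∀ {P Q : C} (w : P ⟶ Q), IsPiFib π w →
      ∀ (top : X ⟶ P) (bot : E₀ ⟶ Q), top ≫ w = u₀ ≫ bot →
        ∃ l : E₀ ⟶ P, u₀ ≫ l = top ∧ l ≫ w = bot)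
    (hu₁LLP : ∀ {P Q : C} (w : P ⟶ Q), IsPiFib π w →
      ∀ (top : X ⟶ P) (bot : E₁ ⟶ Q), top ≫ w = u₁ ≫ bot →
        ∃ l : E₁ ⟶ P, u₁ ≫ l = top ∧ l ≫ w = bot)
    (J : E₀ ⟶ E₁) (hJu : u₀ ≫ J = u₁) (hJp : J ≫ p₁ = p₀)
    -- Id-type data for E₀ over B
    (idE₀ : C) (refl₀ : E₀ ⟶ idE₀) (evb₀ : idE₀ ⟶ pullback p₀ p₀)
    (hfact₀ : refl₀ ≫ evb₀ = pullback.lift (𝟙 E₀) (𝟙 E₀) rfl)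
    (hevb₀ : IsPiFib π evb₀)
    -- Id-type data for E₁ over B
    (idE₁ : C) (refl₁ : E₁ ⟶ idE₁) (evb₁ : idE₁ ⟶ pullback p₁ p₁)
    (hfact₁ : refl₁ ≫ evb₁ = pullback.lift (𝟙 E₁) (𝟙 E₁) rfl)
    (hevb₁ : IsPiFib π evb₁) :
    ∃ (s r : E₁ ⟶ E₀) (hs : s ≫ p₀ = p₁) (hr : r ≫ p₀ = p₁)
      (_ : u₁ ≫ s = u₀) (_ : u₁ ≫ r = u₀)
      (Hs : E₁ ⟶ idE₁) (Hr : E₀ ⟶ idE₀),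
      Hs ≫ evb₁ = pullback.lift (s ≫ J) (𝟙 E₁)
        (by rw [Category.assoc, hJp, hs, Category.id_comp]) ∧
      u₁ ≫ Hs = u₁ ≫ refl₁ ∧
      Hr ≫ evb₀ = pullback.lift (J ≫ r) (𝟙 E₀)
        (by rw [Category.assoc, hr, hJp, Category.id_comp]) ∧
      u₀ ≫ Hr = u₀ ≫ refl₀ := by
  obtain ⟨s, hsu, hsp⟩ := hu₁LLP p₀ h₀ u₀ p₁ hu
  obtain ⟨Hs, hHs, hHsu⟩ := exists_idHomotopy_rel hu₁LLP hfact₁ hevb₁ (s ≫ J) (𝟙 E₁)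
    (by simp [hJp, hsp]) (by simp [reassoc_of% hsu, hJu])
  obtain ⟨Hr, hHr, hHru⟩ := exists_idHomotopy_rel hu₀LLP hfact₀ hevb₀ (J ≫ s) (𝟙 E₀)
    (by simp [hJp, hsp]) (by simp [reassoc_of% hJu, hsu])
  rw [Category.id_comp] at hHsu hHru
  exact ⟨s, s, hsp, hsp, hsu, hsu, Hs, Hr, hHs, hHsu, hHr, hHru⟩
end

section
/- Composition closure of Reedy fibrations in a gluing category: let M : C₀ ⥤ C₁ be lex, with universal maps π₀ in C₀ and π₁ in C₁ such that π₀-fibrations and π₁-fibrations are each closed under composition and pullback. Call a map E ⟶ B in Gl(M) a Reedy fibration if its 0-component E₀ ⟶ B₀ is a π₀-fibration and its relative matching map E₁ ⟶ B₁ ×_{M B₀} M E₀ is a π₁-fibration. Then Reedy fibrations in Gl(M) are closed under composition. -/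
open CategoryTheory CategoryTheory.Limits

variable {C₀ C₁ : Type*} [Category C₀] [Category C₁] [HasFiniteLimits C₀] [HasFiniteLimits C₁]

/-- A map `f : E ⟶ B` in the gluing category `Gl(M) = C₁ ↓ M` is a Reedy fibration if
its `C₀`-component is a `π₀`-fibration and its relative matching map
`E₁ ⟶ B₁ ×_{M B₀} M E₀` is a `π₁`-fibration. -/
def IsReedyFib (M : C₀ ⥤ C₁) {Ut₀ U₀ : C₀} (π₀ : Ut₀ ⟶ U₀) {Ut₁ U₁ : C₁} (π₁ : Ut₁ ⟶ U₁)
    {E B : Comma (𝟭 C₁) M} (f : E ⟶ B) : Prop :=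
  IsPiFib π₀ f.right ∧
    IsPiFib π₁
      (pullback.lift f.left E.hom (by simpa using f.w) :
        E.left ⟶ pullback B.hom (M.map f.right))

/-!
The 0-components of Reedy fibrations compose because `π₀`-fibrations do. For the matching
maps, write `e : E₁ ⟶ M E₀`, `b : B₁ ⟶ M B₀`, `a : A₁ ⟶ M A₀`. The matching map of `g ∘ f`,
`E₁ ⟶ A₁ ×_{M A₀} M E₀`, factors through the matching map `E₁ ⟶ B₁ ×_{M B₀} M E₀` of `f`,
and by the pasting lemma the remaining map `B₁ ×_{M B₀} M E₀ ⟶ A₁ ×_{M A₀} M E₀` is the base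
change of the matching map `B₁ ⟶ A₁ ×_{M A₀} M B₀` of `g`. Being a pullback of `π` is
itself stable under base change (paste the squares), so closure of `π₁`-fibrations under
composition finishes the proof.
-/

lemma IsPiFib.of_isPullback_s12 {C : Type*} [Category C] {Ut U : C} {π : Ut ⟶ U}
    {E B E' B' : C} {p : E ⟶ B} {p' : E' ⟶ B'} {u : E' ⟶ E} {v : B' ⟶ B}
    (sq : IsPullback u p' p v) (hp : IsPiFib π p) : IsPiFib π p' := by
  obtain ⟨c, t, h⟩ := hp
  exact ⟨v ≫ c, u ≫ t, sq.paste_horiz h⟩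

section GapMap

attribute [local simp] pullback.lift_fst pullback.lift_snd pullback.lift_fst_assoc
  pullback.lift_snd_assoc

variable {C : Type*} [Category C] [HasPullbacks C] {E₁ B₁ A₁ ME MB MA : C}
  {e : E₁ ⟶ ME} {b : B₁ ⟶ MB} {a : A₁ ⟶ MA}
  {fl : E₁ ⟶ B₁} {fr : ME ⟶ MB} {gl : B₁ ⟶ A₁} {gr : MB ⟶ MA}

lemma isPullback_pullbackMap_comp_right (a : A₁ ⟶ MA) (fr : ME ⟶ MB) (gr : MB ⟶ MA) :
    IsPullback (pullback.map a (fr ≫ gr) a gr (𝟙 _) fr (𝟙 _) (by simp) (by simp))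
      (pullback.snd a (fr ≫ gr)) (pullback.snd a gr) fr := by
  refine IsPullback.of_right ?_ (pullback.lift_snd _ _ _) (IsPullback.of_hasPullback a gr)
  simpa [pullback.map] using IsPullback.of_hasPullback a (fr ≫ gr)

lemma isPullback_pullbackMap_pullbackLift (wg : gl ≫ a = b ≫ gr) :
    IsPullback (pullback.fst b fr)
      (pullback.map b fr a (fr ≫ gr) gl (𝟙 _) gr wg.symm (by simp))
      (pullback.lift gl b wg)
      (pullback.map a (fr ≫ gr) a gr (𝟙 _) fr (𝟙 _) (by simp) (by simp)) := by
  refine IsPullback.of_bot ?_ ?_ (isPullback_pullbackMap_comp_right a fr gr)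
  · simpa [pullback.map] using IsPullback.of_hasPullback b fr
  · ext <;> simp [pullback.map, pullback.condition]

lemma pullback.lift_comp_eq_lift_comp_map (wf : fl ≫ b = e ≫ fr) (wg : gl ≫ a = b ≫ gr)
    (w : (fl ≫ gl) ≫ a = e ≫ fr ≫ gr) :
    pullback.lift (fl ≫ gl) e w = pullback.lift fl e wf ≫
      pullback.map b fr a (fr ≫ gr) gl (𝟙 _) gr wg.symm (by simp) := by
  ext <;> simp [pullback.map]

lemma IsPiFib.pullback_lift_comp {Ut U : C} {π : Ut ⟶ U}
    (hcomp : ∀ {X Y Z : C} (p : X ⟶ Y) (q : Y ⟶ Z),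
      IsPiFib π p → IsPiFib π q → IsPiFib π (p ≫ q))
    (wf : fl ≫ b = e ≫ fr) (wg : gl ≫ a = b ≫ gr) (w : (fl ≫ gl) ≫ a = e ≫ fr ≫ gr)
    (hf : IsPiFib π (pullback.lift fl e wf)) (hg : IsPiFib π (pullback.lift gl b wg)) :
    IsPiFib π (pullback.lift (fl ≫ gl) e w) := by
  rw [pullback.lift_comp_eq_lift_comp_map wf wg]
  exact hcomp _ _ hf (IsPiFib.of_isPullback_s12 (isPullback_pullbackMap_pullbackLift wg) hg)

end GapMap

theorem reedy_fib_comp_general (M : C₀ ⥤ C₁)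
    {Ut₀ U₀ : C₀} (π₀ : Ut₀ ⟶ U₀) {Ut₁ U₁ : C₁} (π₁ : Ut₁ ⟶ U₁)
    (h₀comp : ∀ {X Y Z : C₀} (a : X ⟶ Y) (b : Y ⟶ Z),
      IsPiFib π₀ a → IsPiFib π₀ b → IsPiFib π₀ (a ≫ b))
    (h₁comp : ∀ {X Y Z : C₁} (a : X ⟶ Y) (b : Y ⟶ Z),
      IsPiFib π₁ a → IsPiFib π₁ b → IsPiFib π₁ (a ≫ b))
    {E B A : Comma (𝟭 C₁) M} (f : E ⟶ B) (g : B ⟶ A)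
    (hf : IsReedyFib M π₀ π₁ f) (hg : IsReedyFib M π₀ π₁ g) :
    IsReedyFib M π₀ π₁ (f ≫ g) := by
  refine ⟨h₀comp _ _ hf.1 hg.1, ?_⟩
  convert IsPiFib.pullback_lift_comp h₁comp _ _ (by simpa using (f ≫ g).w) hf.2 hg.2
    using 3 <;> simp

/-- if `π₀`- and `π₁`-fibrations are each closed under composition and
stable under pullback, then Reedy fibrations in the gluing category `Gl(M)` of a lex
functor `M : C₀ ⥤ C₁` are closed under composition. -/
theorem reedy_fib_comp (M : C₀ ⥤ C₁) [PreservesFiniteLimits M]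
    {Ut₀ U₀ : C₀} (π₀ : Ut₀ ⟶ U₀) {Ut₁ U₁ : C₁} (π₁ : Ut₁ ⟶ U₁)
    (h₀comp : ∀ {X Y Z : C₀} (a : X ⟶ Y) (b : Y ⟶ Z),
      IsPiFib π₀ a → IsPiFib π₀ b → IsPiFib π₀ (a ≫ b))
    (h₀pb : ∀ {X Y Z : C₀} (a : X ⟶ Z) (b : Y ⟶ Z),
      IsPiFib π₀ a → IsPiFib π₀ (pullback.snd a b))
    (h₁comp : ∀ {X Y Z : C₁} (a : X ⟶ Y) (b : Y ⟶ Z),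
      IsPiFib π₁ a → IsPiFib π₁ b → IsPiFib π₁ (a ≫ b))
    (h₁pb : ∀ {X Y Z : C₁} (a : X ⟶ Z) (b : Y ⟶ Z),
      IsPiFib π₁ a → IsPiFib π₁ (pullback.snd a b))
    {E B A : Comma (𝟭 C₁) M} (f : E ⟶ B) (g : B ⟶ A)
    (hf : IsReedyFib M π₀ π₁ f) (hg : IsReedyFib M π₀ π₁ g) :
    IsReedyFib M π₀ π₁ (f ≫ g) :=
  reedy_fib_comp_general M π₀ π₁ h₀comp h₁comp f g hf hg
end
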